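/- arXiv:1808.10119 — 3 statements merged into one kernel-verified Lean document; each statement's English description precedes it below -/
import Mathlib

section
/- Let n ≥ 3 and let C be the cycle graph on n vertices. Let {s₁, t₁} and {s₂, t₂} be two commodities with s₁ ≠ t₁ and s₂ ≠ t₂, and let r₁ > 0, r₂ > 0 be real numbers. For i ∈ {1,2} let P_i be the set of s_i–t_i paths in C. Let f and f' be feasible flows for the two-commodity instance (C, (s_i,t_i)_{i=1,2}, (r₁,r₂)), i.e., for each i a nonnegative real-valued function on P_i whose values sum to r_i, and for an edge e write f(e) = Σ_{i=1,2} Σ_{p ∈ P_i, e ∈ p} f(p), and similarly f'(e). Then there exist i ∈ {1,2} and a path p ∈ P_i with f(p) > 0 such that f(e) ≥ f'(e) for every edge e of p. -/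
open SimpleGraph Finset

/-- The total flow amount on an edge `e` induced by a path-flow `f`
on the set of `s`–`t` paths in the cycle graph on `n` vertices. -/
noncomputable def edgeFlow {n : ℕ} (s t : Fin n)
    (f : (cycleGraph n).Path s t → ℝ) (e : Sym2 (Fin n)) : ℝ :=
  ∑ q ∈ Finset.univ.filter
      (fun q : (cycleGraph n).Path s t =>
        e ∈ ((q : (cycleGraph n).Walk s t)).edges), f q

namespace CycleFlow

open Fin.NatCast Fin.IntCast Fin.CommRing

lemma walk_getVert_injOn {V : Type*} {G : SimpleGraph V} {u v : V} {w : G.Walk u v}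
    (hw : w.IsPath) :
    ∀ i, i ≤ w.length → ∀ j, j ≤ w.length → w.getVert i = w.getVert j → i = j := by
  induction w with
  | nil => intro i hi j hj _; simp at hi hj; omega
  | cons h p ih =>
    rw [Walk.cons_isPath_iff] at hw
    intro i hi j hj hij
    match i, j with
    | 0, 0 => rfl
    | 0, j+1 =>
      exfalso; apply hw.2
      rw [Walk.mem_support_iff_exists_getVert]
      exact ⟨j, by simpa [Walk.getVert_cons_succ] using hij.symm, by simpa using hj⟩
    | i+1, 0 =>
      exfalso; apply hw.2
      rw [Walk.mem_support_iff_exists_getVert]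
      exact ⟨i, by simpa [Walk.getVert_cons_succ] using hij, by simpa using hi⟩
    | i+1, j+1 =>
      have := ih hw.1 i (by simpa using hi) j (by simpa using hj) hij
      omega

lemma walk_ext {V : Type*} {G : SimpleGraph V} : ∀ {u v : V} (w₁ w₂ : G.Walk u v),
    w₁.length = w₂.length → (∀ i, w₁.getVert i = w₂.getVert i) → w₁ = w₂
  | _, _, .nil, .nil, _, _ => rfl
  | _, _, .nil, .cons _ _, hl, _ => by simp at hl
  | _, _, .cons _ _, .nil, hl, _ => by simp at hl
  | u, v, .cons hadj p, .cons hadj' p', hl, h => by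
    have h1 : p.getVert 0 = p'.getVert 0 := h 1
    rw [Walk.getVert_zero, Walk.getVert_zero] at h1
    subst h1
    rw [walk_ext p p' (by simpa using hl) (fun i => h (i+1))]

lemma mem_edges_iff' {V : Type*} {G : SimpleGraph V} {u v : V} (w : G.Walk u v) (e : Sym2 V) :
    e ∈ w.edges ↔ ∃ k, k < w.length ∧ e = s(w.getVert k, w.getVert (k+1)) := by
  induction w with
  | nil => simp
  | cons h p ih =>
    simp only [Walk.edges_cons, List.mem_cons, ih, Walk.length_cons]
    constructor
    · rintro (rfl | ⟨k, hk, rfl⟩)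
      · exact ⟨0, by omega, by simp [Walk.getVert_zero, Walk.getVert_cons_succ]⟩
      · exact ⟨k+1, by omega, rfl⟩
    · rintro ⟨k, hk, rfl⟩
      match k with
      | 0 => left; simp [Walk.getVert_zero, Walk.getVert_cons_succ]
      | k+1 => right; exact ⟨k, by omega, rfl⟩


variable {n : ℕ} [NeZero n]

lemma val_one' (hn : 3 ≤ n) : (1 : Fin n).val = 1 := by
  rw [show (1 : Fin n) = ((1 : ℕ) : Fin n) by norm_cast, Fin.val_natCast,
    Nat.mod_eq_of_lt (by omega)]

lemma cg_adj (hn : 3 ≤ n) {u v : Fin n} :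
    (cycleGraph n).Adj u v ↔ v = u + 1 ∨ v = u - 1 := by
  rw [cycleGraph_adj']
  constructor
  · rintro (h | h)
    · right
      have h2 : u - v = 1 := Fin.ext (by rw [h, val_one' hn])
      have h3 : v = u - (u - v) := by ring
      rw [h3, h2]
    · left
      have h2 : v - u = 1 := Fin.ext (by rw [h, val_one' hn])
      have h3 : v = u + (v - u) := by ring
      rw [h3, h2]
  · rintro (rfl | rfl)
    · right
      rw [show u + 1 - u = 1 by ring, val_one' hn]
    · left
      rw [show u - (u - 1) = 1 by ring, val_one' hn]

lemma two_ne_zero' (hn : 3 ≤ n) : (2 : Fin n) ≠ 0 := by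
  intro h
  have h2 := congrArg Fin.val h
  rw [show (2 : Fin n) = ((2 : ℕ) : Fin n) by norm_cast, Fin.val_natCast, Fin.val_zero,
    Nat.mod_eq_of_lt (by omega)] at h2
  omega

lemma sym2_eq_iff (hn : 3 ≤ n) {i j : Fin n} :
    s(i, i + 1) = s(j, j + 1) ↔ i = j := by
  constructor
  · intro h
    rw [Sym2.eq_iff] at h
    rcases h with ⟨h1, _⟩ | ⟨h1, h2⟩
    · exact h1
    · exfalso
      apply two_ne_zero' hn
      have h3 : i + 2 = i + 0 := by rw [add_zero]; linear_combination h2 - h1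
      exact add_left_cancel h3
  · rintro rfl; rfl

def upWalk (hn : 3 ≤ n) : (m : ℕ) → (s : Fin n) → (cycleGraph n).Walk s (s + m)
  | 0, s => Walk.nil.copy rfl (by push_cast; ring)
  | m + 1, s =>
    (Walk.cons (by rw [cg_adj hn]; left; rfl) (upWalk hn m (s + 1))).copy rfl
      (by push_cast; ring)

@[simp] lemma upWalk_length (hn : 3 ≤ n) (m : ℕ) (s : Fin n) :
    (upWalk hn m s).length = m := by
  induction m generalizing s with
  | zero => simp [upWalk]
  | succ m ih => simp [upWalk, ih]

lemma upWalk_getVert (hn : 3 ≤ n) (m : ℕ) (s : Fin n) (k : ℕ) (hk : k ≤ m) :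
    (upWalk hn m s).getVert k = s + k := by
  induction m generalizing s k with
  | zero =>
    interval_cases k
    simp [upWalk]
  | succ m ih =>
    match k with
    | 0 => simp [upWalk]
    | k + 1 =>
      rw [upWalk, Walk.getVert_copy, Walk.getVert_cons_succ, ih (s+1) k (by omega)]
      push_cast; ring

lemma upWalk_isPath (hn : 3 ≤ n) (m : ℕ) (hm : m < n) (s : Fin n) :
    (upWalk hn m s).IsPath := by
  induction m generalizing s with
  | zero => simp [upWalk]
  | succ m ih =>
    rw [upWalk]
    rw [Walk.isPath_copy]
    rw [Walk.cons_isPath_iff]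
    refine ⟨ih (by omega) (s + 1), ?_⟩
    rw [Walk.mem_support_iff_exists_getVert]
    rintro ⟨k, hk, hk2⟩
    rw [upWalk_length] at hk2
    rw [upWalk_getVert hn m (s+1) k hk2] at hk
    have : ((1 + k : ℕ) : Fin n) = 0 := by
      push_cast
      linear_combination hk - s
    have h2 := congrArg Fin.val this
    rw [Fin.val_natCast, Fin.val_zero, Nat.mod_eq_of_lt (by omega)] at h2
    omega

def upw (hn : 3 ≤ n) (s t : Fin n) : (cycleGraph n).Walk s t :=
  (upWalk hn (t - s).val s).copy rfl (by rw [Fin.cast_val_eq_self, add_sub_cancel])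

@[simp] lemma upw_length (hn : 3 ≤ n) (s t : Fin n) : (upw hn s t).length = (t - s).val := by
  simp [upw]

lemma upw_getVert (hn : 3 ≤ n) (s t : Fin n) (k : ℕ) (hk : k ≤ (t - s).val) :
    (upw hn s t).getVert k = s + k := by
  rw [upw, Walk.getVert_copy, upWalk_getVert hn _ s k hk]

lemma upw_isPath (hn : 3 ≤ n) (s t : Fin n) : (upw hn s t).IsPath := by
  rw [upw, Walk.isPath_copy]
  exact upWalk_isPath hn _ (t - s).is_lt s

def upP (hn : 3 ≤ n) (s t : Fin n) : (cycleGraph n).Path s t := ⟨upw hn s t, upw_isPath hn s t⟩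

def downP (hn : 3 ≤ n) (s t : Fin n) : (cycleGraph n).Path s t :=
  ⟨(upw hn t s).reverse, (upw_isPath hn t s).reverse⟩

@[simp] lemma downP_length (hn : 3 ≤ n) (s t : Fin n) :
    (downP hn s t : (cycleGraph n).Walk s t).length = (s - t).val := by
  simp [downP]

lemma downP_getVert (hn : 3 ≤ n) (s t : Fin n) (k : ℕ) (hk : k ≤ (s - t).val) :
    (downP hn s t : (cycleGraph n).Walk s t).getVert k = s - k := by
  show ((upw hn t s).reverse).getVert k = s - k
  rw [Walk.getVert_reverse, upw_length, upw_getVert hn t s _ (by omega),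
    Nat.cast_sub hk, Fin.cast_val_eq_self]
  ring

lemma classify (hn : 3 ≤ n) {s t : Fin n} (w : (cycleGraph n).Walk s t) (hw : w.IsPath) :
    (∀ k, k ≤ w.length → w.getVert k = s + k) ∨ (∀ k, k ≤ w.length → w.getVert k = s - k) := by
  rcases Nat.eq_zero_or_pos w.length with h0 | hpos
  · left
    intro k hk
    have hk0 : k = 0 := by omega
    subst hk0; simp
  have hadj1 := w.adj_getVert_succ (by omega : 0 < w.length)
  rw [Walk.getVert_zero, cg_adj hn] at hadj1
  have key : ∀ d : Fin n, (d = 1 ∨ d = -1) → w.getVert 1 = s + d →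
      ∀ k, k ≤ w.length → w.getVert k = s + k * d := by
    intro d hd h1
    have step : ∀ k, k < w.length → w.getVert (k + 1) = w.getVert k + d := by
      intro k
      induction k with
      | zero => intro _; simpa using h1
      | succ k ih =>
        intro hk
        have ihk := ih (by omega)
        have hadj := w.adj_getVert_succ hk
        rw [cg_adj hn] at hadj
        have hne : w.getVert (k + 1 + 1) ≠ w.getVert k := by
          intro h
          have := walk_getVert_injOn hw (k+1+1) (by omega) k (by omega) h
          omega
        have hbad : w.getVert (k + 1) - d = w.getVert k := by rw [ihk]; ring
        rcases hd with rfl | rfl <;> rcases hadj with h | h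
        · exact h
        · exact absurd (h.trans hbad) hne
        · exfalso
          apply hne
          rw [h, ihk]; ring
        · rw [h, ihk]; ring
    intro k
    induction k with
    | zero => intro _; simp
    | succ k ih =>
      intro hk
      rw [step k (by omega), ih (by omega)]
      push_cast; ring
  rcases hadj1 with h1 | h1
  · left
    intro k hk
    have := key 1 (Or.inl rfl) (by rw [h1]) k hk
    rw [this, mul_one]
  · right
    intro k hk
    have := key (-1) (Or.inr rfl) (by rw [h1]; ring) k hk
    rw [this]; ring

lemma length_lt' (hn : 3 ≤ n) {s t : Fin n} {w : (cycleGraph n).Walk s t} (hw : w.IsPath) :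
    w.length < n := by
  have := hw.length_lt
  simpa using this

lemma natCast_inj_of_lt {a b : ℕ} (ha : a < n) (hb : b < n) (h : (a : Fin n) = (b : Fin n)) :
    a = b := by
  have := congrArg Fin.val h
  rwa [Fin.val_natCast, Fin.val_natCast, Nat.mod_eq_of_lt ha, Nat.mod_eq_of_lt hb] at this

lemma path_eq_up_or_down (hn : 3 ≤ n) {s t : Fin n} (p : (cycleGraph n).Path s t) :
    p = upP hn s t ∨ p = downP hn s t := by
  obtain ⟨w, hw⟩ := p
  rcases classify hn w hw with h | h
  · left
    have hlen : w.length = (t - s).val := by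
      have ht : w.getVert w.length = t := w.getVert_length
      rw [h w.length le_rfl] at ht
      have : ((w.length : ℕ) : Fin n) = (((t - s).val : ℕ) : Fin n) := by
        rw [Fin.cast_val_eq_self]
        linear_combination ht
      exact natCast_inj_of_lt (length_lt' hn hw) (t - s).is_lt this
    apply Subtype.ext
    show w = upw hn s t
    apply walk_ext
    · rw [upw_length, hlen]
    · intro i
      rcases le_or_gt i w.length with hi | hi
      · rw [h i hi, upw_getVert hn s t i (by omega)]
      · rw [Walk.getVert_of_length_le w (by omega),
          Walk.getVert_of_length_le _ (by rw [upw_length]; omega)]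
  · right
    have hlen : w.length = (s - t).val := by
      have ht : w.getVert w.length = t := w.getVert_length
      rw [h w.length le_rfl] at ht
      have : ((w.length : ℕ) : Fin n) = (((s - t).val : ℕ) : Fin n) := by
        rw [Fin.cast_val_eq_self]
        linear_combination -ht
      exact natCast_inj_of_lt (length_lt' hn hw) (s - t).is_lt this
    apply Subtype.ext
    show w = (downP hn s t : (cycleGraph n).Walk s t)
    apply walk_ext
    · rw [downP_length, hlen]
    · intro i
      rcases le_or_gt i w.length with hi | hi
      · rw [h i hi, downP_getVert hn s t i (by omega)]
      · rw [Walk.getVert_of_length_le w (by omega),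
          Walk.getVert_of_length_le _ (by rw [downP_length]; omega)]

lemma val_pos_of_ne {a b : Fin n} (h : a ≠ b) : 0 < (a - b).val := by
  rcases Nat.eq_zero_or_pos (a - b).val with h0 | h1
  · exfalso
    apply h
    have : a - b = 0 := Fin.ext (by simpa using h0)
    linear_combination this
  · exact h1

lemma upP_ne_downP (hn : 3 ≤ n) {s t : Fin n} (hst : s ≠ t) :
    upP hn s t ≠ downP hn s t := by
  intro h
  have h1 : (upP hn s t : (cycleGraph n).Walk s t).getVert 1 =
      (downP hn s t : (cycleGraph n).Walk s t).getVert 1 := by rw [h]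
  rw [downP_getVert hn s t 1 (val_pos_of_ne hst)] at h1
  have h2 : (upP hn s t : (cycleGraph n).Walk s t).getVert 1 = s + 1 :=
    upw_getVert hn s t 1 (val_pos_of_ne (Ne.symm hst))
  rw [h2] at h1
  apply two_ne_zero' hn
  push_cast at h1
  linear_combination h1

lemma mem_upw_edges (hn : 3 ≤ n) (s t : Fin n) (i : Fin n) :
    s(i, i + 1) ∈ (upw hn s t).edges ↔ (i - s).val < (t - s).val := by
  rw [mem_edges_iff']
  constructor
  · rintro ⟨k, hk, he⟩
    rw [upw_length] at hk
    rw [upw_getVert hn s t k (by omega), upw_getVert hn s t (k+1) (by omega)] at he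
    have he' : s(i, i + 1) = s(s + (k : Fin n), s + (k : Fin n) + 1) := by
      rw [he]; congr 1; push_cast; ring
    rw [sym2_eq_iff hn] at he'
    have : (i - s).val = ((k : Fin n)).val := by rw [he']; congr 1; ring
    rw [this, Fin.val_natCast, Nat.mod_eq_of_lt (by omega)]
    exact hk
  · intro hlt
    refine ⟨(i - s).val, by rw [upw_length]; exact hlt, ?_⟩
    rw [upw_getVert hn s t _ (by omega), upw_getVert hn s t _ (by omega)]
    have e1 : s + (((i - s).val : ℕ) : Fin n) = i := by rw [Fin.cast_val_eq_self]; ring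
    have e2 : s + (((i - s).val + 1 : ℕ) : Fin n) = i + 1 := by
      push_cast
      ring
    rw [e1, e2]

lemma mem_downP_edges (hn : 3 ≤ n) (s t : Fin n) (i : Fin n) :
    s(i, i + 1) ∈ ((downP hn s t : (cycleGraph n).Walk s t)).edges ↔
      (i - t).val < (s - t).val := by
  show s(i, i + 1) ∈ ((upw hn t s).reverse).edges ↔ _
  rw [Walk.edges_reverse, List.mem_reverse]
  exact mem_upw_edges hn t s i

lemma edge_form (hn : 3 ≤ n) {s t : Fin n} (w : (cycleGraph n).Walk s t) {e : Sym2 (Fin n)}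
    (he : e ∈ w.edges) : ∃ i : Fin n, e = s(i, i + 1) := by
  induction e with
  | _ x y =>
    have hadj := w.adj_of_mem_edges he
    rw [cg_adj hn] at hadj
    rcases hadj with rfl | rfl
    · exact ⟨x, rfl⟩
    · exact ⟨x - 1, by rw [sub_add_cancel, Sym2.eq_swap]⟩

lemma xor_cond (hn : 3 ≤ n) {s t : Fin n} (hst : s ≠ t) (i : Fin n) :
    ((i - s).val < (t - s).val ↔ ¬((i - t).val < (s - t).val)) := by
  set d := (t - s).val with hd
  set e := (s - t).val with he
  set A := (i - s).val with hA
  set B := (i - t).val with hB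
  have hde : d + e = n := by
    have h0 : ((t - s) + (s - t)) = (0 : Fin n) := by ring
    have := congrArg Fin.val h0
    rw [Fin.val_add, Fin.val_zero] at this
    have hd1 : 0 < d := val_pos_of_ne (Ne.symm hst)
    have he1 : 0 < e := val_pos_of_ne hst
    have hdn : d < n := (t - s).is_lt
    have hen : e < n := (s - t).is_lt
    rcases Nat.lt_or_ge (d + e) n with h | h
    · rw [Nat.mod_eq_of_lt h] at this; omega
    · rw [Nat.mod_eq_sub_mod h, Nat.mod_eq_of_lt (by omega)] at this; omega
  have hABd : A = (B + d) % n := by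
    have h0 : (i - s) = (i - t) + (t - s) := by ring
    have := congrArg Fin.val h0
    rwa [Fin.val_add] at this
  have hAn : A < n := (i - s).is_lt
  have hBn : B < n := (i - t).is_lt
  rcases Nat.lt_or_ge (B + d) n with h | h
  · rw [Nat.mod_eq_of_lt h] at hABd; omega
  · rw [Nat.mod_eq_sub_mod h, Nat.mod_eq_of_lt (by omega)] at hABd; omega

lemma univ_eq_pair (hn : 3 ≤ n) {s t : Fin n} (hst : s ≠ t) :
    (Finset.univ : Finset ((cycleGraph n).Path s t)) = {upP hn s t, downP hn s t} := by
  ext p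
  simp only [Finset.mem_univ, Finset.mem_insert, Finset.mem_singleton, true_iff]
  exact path_eq_up_or_down hn p

lemma sum_eq_pair (hn : 3 ≤ n) {s t : Fin n} (hst : s ≠ t) (f : (cycleGraph n).Path s t → ℝ) :
    ∑ p, f p = f (upP hn s t) + f (downP hn s t) := by
  rw [univ_eq_pair hn hst, Finset.sum_pair (upP_ne_downP hn hst)]

lemma edgeFlow_eq (hn : 3 ≤ n) {s t : Fin n} (hst : s ≠ t) (f : (cycleGraph n).Path s t → ℝ)
    (i : Fin n) :
    edgeFlow s t f s(i, i + 1) =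
      if (i - s).val < (t - s).val then f (upP hn s t) else f (downP hn s t) := by
  rw [edgeFlow, Finset.sum_filter, univ_eq_pair hn hst,
    Finset.sum_pair (upP_ne_downP hn hst)]
  by_cases hc : (i - s).val < (t - s).val
  · rw [if_pos hc]
    have h1 : s(i, i+1) ∈ ((upP hn s t : (cycleGraph n).Walk s t)).edges :=
      (mem_upw_edges hn s t i).mpr hc
    have h2 : ¬ s(i, i+1) ∈ ((downP hn s t : (cycleGraph n).Walk s t)).edges := by
      rw [mem_downP_edges hn s t i]
      exact (xor_cond hn hst i).mp hc
    rw [if_pos h1, if_neg h2, add_zero]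
  · rw [if_neg hc]
    have h2 : s(i, i+1) ∈ ((downP hn s t : (cycleGraph n).Walk s t)).edges := by
      rw [mem_downP_edges hn s t i]
      by_contra hcon
      exact hc ((xor_cond hn hst i).mpr hcon)
    have h1 : ¬ s(i, i+1) ∈ ((upP hn s t : (cycleGraph n).Walk s t)).edges := by
      show ¬ s(i, i+1) ∈ (upw hn s t).edges
      rw [mem_upw_edges hn s t i]; exact hc
    rw [if_neg h1, if_pos h2, zero_add]

lemma main_half (hn : 3 ≤ n) (s₁ t₁ s₂ t₂ : Fin n) (hst₁ : s₁ ≠ t₁) (hst₂ : s₂ ≠ t₂)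
    (r₁ : ℝ) (hr₁ : 0 < r₁)
    (f₁ f'₁ : (cycleGraph n).Path s₁ t₁ → ℝ) (f₂ f'₂ : (cycleGraph n).Path s₂ t₂ → ℝ)
    (hf₁ : ∀ p, 0 ≤ f₁ p) (hf'₁ : ∀ p, 0 ≤ f'₁ p)
    (hfr₁ : ∑ p, f₁ p = r₁) (hf'r₁ : ∑ p, f'₁ p = r₁)
    (hsum₂ : ∑ p, f₂ p = ∑ p, f'₂ p)
    (hab : max (f₂ (upP hn s₂ t₂) - f'₂ (upP hn s₂ t₂))
             (f₂ (downP hn s₂ t₂) - f'₂ (downP hn s₂ t₂)) ≤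
           max (f₁ (upP hn s₁ t₁) - f'₁ (upP hn s₁ t₁))
             (f₁ (downP hn s₁ t₁) - f'₁ (downP hn s₁ t₁))) :
    ∃ p : (cycleGraph n).Path s₁ t₁, 0 < f₁ p ∧
      ∀ e ∈ ((p : (cycleGraph n).Walk s₁ t₁)).edges,
        edgeFlow s₁ t₁ f'₁ e + edgeFlow s₂ t₂ f'₂ e ≤
          edgeFlow s₁ t₁ f₁ e + edgeFlow s₂ t₂ f₂ e := by
  set P := upP hn s₁ t₁ with hP
  set Q := downP hn s₁ t₁ with hQ
  set A := upP hn s₂ t₂ with hA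
  set B := downP hn s₂ t₂ with hB
  have hsum1 : f₁ P + f₁ Q = r₁ := by rw [← sum_eq_pair hn hst₁ f₁]; exact hfr₁
  have hsum1' : f'₁ P + f'₁ Q = r₁ := by rw [← sum_eq_pair hn hst₁ f'₁]; exact hf'r₁
  have hsum2 : f₂ A + f₂ B = f'₂ A + f'₂ B := by
    rw [← sum_eq_pair hn hst₂ f₂, ← sum_eq_pair hn hst₂ f'₂]; exact hsum₂
  set a := f₁ P - f'₁ P with ha
  set b := f₂ A - f'₂ A with hb
  have hQd : f₁ Q - f'₁ Q = -a := by rw [ha]; linarith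
  have hBd : f₂ B - f'₂ B = -b := by rw [hb]; linarith
  have hab' : max b (-b) ≤ max a (-a) := by
    rw [ha, hb, ← hQd, ← hBd]; exact hab
  obtain ⟨p, hppos, hpd⟩ : ∃ p, 0 < f₁ p ∧ max a (-a) ≤ f₁ p - f'₁ p := by
    rcases lt_trichotomy a 0 with h | h | h
    · refine ⟨Q, ?_, ?_⟩
      · have := hf'₁ Q; linarith
      · rw [hQd, max_eq_right (by linarith)]
    · rcases le_or_gt (f₁ P) 0 with hP0 | hP0
      · refine ⟨Q, ?_, ?_⟩
        · have := hf₁ P; linarith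
        · rw [hQd, h]; simp
      · refine ⟨P, hP0, ?_⟩
        rw [← ha, h]; norm_num
    · refine ⟨P, ?_, ?_⟩
      · have := hf'₁ P; linarith
      · rw [max_eq_left (by linarith)]
  refine ⟨p, hppos, ?_⟩
  intro e he
  obtain ⟨i, rfl⟩ := edge_form hn (p : (cycleGraph n).Walk s₁ t₁) he
  rw [edgeFlow_eq hn hst₁ f₁ i, edgeFlow_eq hn hst₁ f'₁ i,
    edgeFlow_eq hn hst₂ f₂ i, edgeFlow_eq hn hst₂ f'₂ i]
  have h1 : (if (i - s₁).val < (t₁ - s₁).val then f₁ P else f₁ Q) -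
      (if (i - s₁).val < (t₁ - s₁).val then f'₁ P else f'₁ Q) = f₁ p - f'₁ p := by
    rcases path_eq_up_or_down hn p with hp | hp
    · have hc1 : (i - s₁).val < (t₁ - s₁).val := by
        rw [← mem_upw_edges hn s₁ t₁ i]
        rw [hp] at he
        exact he
      rw [if_pos hc1, if_pos hc1, hp]
    · have hc1 : ¬ (i - s₁).val < (t₁ - s₁).val := by
        intro hc
        have hd := (xor_cond hn hst₁ i).mp hc
        apply hd
        rw [← mem_downP_edges hn s₁ t₁ i]
        rw [hp] at he
        exact he
      rw [if_neg hc1, if_neg hc1, hp]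
  have hm1 := le_max_left b (-b)
  have hm2 := le_max_right b (-b)
  rcases Classical.em ((i - s₁).val < (t₁ - s₁).val) with hcc | hcc <;>
    rcases Classical.em ((i - s₂).val < (t₂ - s₂).val) with hc2 | hc2
  · simp only [if_pos hcc, if_pos hc2] at h1 ⊢; linarith
  · simp only [if_pos hcc, if_neg hc2] at h1 ⊢; linarith
  · simp only [if_neg hcc, if_pos hc2] at h1 ⊢; linarith
  · simp only [if_neg hcc, if_neg hc2] at h1 ⊢; linarith

end CycleFlow

theorem two_commodity_flow_on_cycle (n : ℕ) (hn : 3 ≤ n)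
    (s₁ t₁ s₂ t₂ : Fin n) (hst₁ : s₁ ≠ t₁) (hst₂ : s₂ ≠ t₂)
    (r₁ r₂ : ℝ) (hr₁ : 0 < r₁) (hr₂ : 0 < r₂)
    (f₁ f'₁ : (cycleGraph n).Path s₁ t₁ → ℝ)
    (f₂ f'₂ : (cycleGraph n).Path s₂ t₂ → ℝ)
    (hf₁ : ∀ p, 0 ≤ f₁ p) (hf'₁ : ∀ p, 0 ≤ f'₁ p)
    (hf₂ : ∀ p, 0 ≤ f₂ p) (hf'₂ : ∀ p, 0 ≤ f'₂ p)
    (hfr₁ : ∑ p, f₁ p = r₁) (hf'r₁ : ∑ p, f'₁ p = r₁)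
    (hfr₂ : ∑ p, f₂ p = r₂) (hf'r₂ : ∑ p, f'₂ p = r₂) :
    (∃ p : (cycleGraph n).Path s₁ t₁, 0 < f₁ p ∧
      ∀ e ∈ ((p : (cycleGraph n).Walk s₁ t₁)).edges,
        edgeFlow s₁ t₁ f'₁ e + edgeFlow s₂ t₂ f'₂ e ≤
          edgeFlow s₁ t₁ f₁ e + edgeFlow s₂ t₂ f₂ e) ∨
    (∃ p : (cycleGraph n).Path s₂ t₂, 0 < f₂ p ∧
      ∀ e ∈ ((p : (cycleGraph n).Walk s₂ t₂)).edges,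
        edgeFlow s₁ t₁ f'₁ e + edgeFlow s₂ t₂ f'₂ e ≤
          edgeFlow s₁ t₁ f₁ e + edgeFlow s₂ t₂ f₂ e) := by
  haveI : NeZero n := ⟨by omega⟩
  rcases le_total
      (max (f₂ (CycleFlow.upP hn s₂ t₂) - f'₂ (CycleFlow.upP hn s₂ t₂))
        (f₂ (CycleFlow.downP hn s₂ t₂) - f'₂ (CycleFlow.downP hn s₂ t₂)))
      (max (f₁ (CycleFlow.upP hn s₁ t₁) - f'₁ (CycleFlow.upP hn s₁ t₁))
        (f₁ (CycleFlow.downP hn s₁ t₁) - f'₁ (CycleFlow.downP hn s₁ t₁))) with h | h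
  · exact Or.inl (CycleFlow.main_half hn s₁ t₁ s₂ t₂ hst₁ hst₂ r₁ hr₁ f₁ f'₁ f₂ f'₂
      hf₁ hf'₁ hfr₁ hf'r₁ (by rw [hfr₂, hf'r₂]) h)
  · obtain ⟨p, hp, hpe⟩ := CycleFlow.main_half hn s₂ t₂ s₁ t₁ hst₂ hst₁ r₂ hr₂ f₂ f'₂ f₁ f'₁
      hf₂ hf'₂ hfr₂ hf'r₂ (by rw [hfr₁, hf'r₁]) h
    exact Or.inr ⟨p, hp, fun e he => by have := hpe e he; linarith⟩
end

section
/- Let r₁ > 0 and r₂ > 0 be reals. Let a, b, a', b' be reals with 0 ≤ a ≤ r₁, 0 ≤ b ≤ r₂, 0 ≤ a' ≤ r₁, 0 ≤ b' ≤ r₂. Then at least one of the following holds: (a > 0 and a + r₂ − b ≥ a' + r₂ − b' and a + b ≥ a' + b'); or (r₁ − a > 0 and b + r₁ − a ≥ b' + r₁ − a' and r₁ + r₂ − a − b ≥ r₁ + r₂ − a' − b'); or (b > 0 and a + b ≥ a' + b' and b + r₁ − a ≥ b' + r₁ − a'); or (r₂ − b > 0 and a + r₂ − b ≥ a' + r₂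 − b' and r₁ + r₂ − a − b ≥ r₁ + r₂ − a' − b'). -/
theorem two_commodity_four_terminals_crossing_arith (r₁ r₂ : ℝ)
    (hr₁ : 0 < r₁) (hr₂ : 0 < r₂) (a b a' b' : ℝ)
    (ha0 : 0 ≤ a) (ha : a ≤ r₁) (hb0 : 0 ≤ b) (hb : b ≤ r₂)
    (ha0' : 0 ≤ a') (ha' : a' ≤ r₁) (hb0' : 0 ≤ b') (hb' : b' ≤ r₂) :
    (0 < a ∧ a' + r₂ - b' ≤ a + r₂ - b ∧ a' + b' ≤ a + b) ∨
    (0 < r₁ - a ∧ b' + r₁ - a' ≤ b + r₁ - a ∧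
      r₁ + r₂ - a' - b' ≤ r₁ + r₂ - a - b) ∨
    (0 < b ∧ a' + b' ≤ a + b ∧ b' + r₁ - a' ≤ b + r₁ - a) ∨
    (0 < r₂ - b ∧ a' + r₂ - b' ≤ a + r₂ - b ∧
      r₁ + r₂ - a' - b' ≤ r₁ + r₂ - a - b) := by
  rcases le_total (a' + b') (a + b) with h1 | h1 <;>
    rcases le_total (a' - b') (a - b) with h2 | h2
  · rcases ha0.eq_or_lt with h | h
    · exact Or.inr (Or.inl ⟨by linarith, by linarith, by linarith⟩)
    · exact Or.inl ⟨h, by linarith, h1⟩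
  · rcases hb0.eq_or_lt with h | h
    · exact Or.inr (Or.inr (Or.inr ⟨by linarith, by linarith, by linarith⟩))
    · exact Or.inr (Or.inr (Or.inl ⟨h, h1, by linarith⟩))
  · rcases hb.eq_or_lt with h | h
    · exact Or.inr (Or.inr (Or.inl ⟨by linarith, by linarith, by linarith⟩))
    · exact Or.inr (Or.inr (Or.inr ⟨by linarith, by linarith, by linarith⟩))
  · rcases ha.eq_or_lt with h | h
    · exact Or.inl ⟨by linarith, by linarith, by linarith⟩
    · exact Or.inr (Or.inl ⟨by linarith, by linarith, by linarith⟩)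
end

section
/- There exist nonnegative reals f(p₁), f(p₂), f(q₁), f(q₂), f(w₁), f(w₂) and f'(p₁), f'(p₂), f'(q₁), f'(q₂), f'(w₁), f'(w₂), where p₁ = {1,2,3}, p₂ = {4,5,6}, q₁ = {2,3,4}, q₂ = {5,6,1}, w₁ = {3,4,5}, w₂ = {6,1,2} are subsets of the edge set {1,2,3,4,5,6} of a 6-cycle, such that: f(p₁)+f(p₂) = f'(p₁)+f'(p₂) = 3, f(q₁)+f(q₂) = f'(q₁)+f'(q₂) = 3, f(w₁)+f(w₂) = f'(w₁)+f'(w₂) = 3; every one of the six path flows under f is strictly positive; and yet for every one of the six paths p there exists an edge j ∈ p with f(j) < f'(j), where for each j ∈ {1,…,6} the edge flow f(j) is the sum of f(p) over the paths p among p₁, p₂, q₁, q₂, w₁, w₂ that contain j, and similarly for f'(j). -/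
open Finset

/-- The six three-edge paths of the 6-cycle (edges labeled `0,…,5` in cyclic
order, corresponding to the edges `1,…,6`), indexed by `Fin 6`:
`0 ↦ p₁ = {1,2,3}`, `1 ↦ p₂ = {4,5,6}`, `2 ↦ q₁ = {2,3,4}`,
`3 ↦ q₂ = {5,6,1}`, `4 ↦ w₁ = {3,4,5}`, `5 ↦ w₂ = {6,1,2}`. -/
def sixCyclePaths : Fin 6 → Finset (Fin 6)
  | 0 => {0, 1, 2}
  | 1 => {3, 4, 5}
  | 2 => {1, 2, 3}
  | 3 => {4, 5, 0}
  | 4 => {2, 3, 4}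
  | 5 => {5, 0, 1}

/-- The total flow amount on edge `j` induced by the path-flow `f` on the six
paths of the 6-cycle. -/
def sixCycleEdgeFlow (f : Fin 6 → ℝ) (j : Fin 6) : ℝ :=
  ∑ i ∈ Finset.univ.filter (fun i => j ∈ sixCyclePaths i), f i



def fEx : Fin 6 → ℝ
  | 0 => 2 | 1 => 1 | 2 => 1 | 3 => 2 | 4 => 2 | 5 => 1

def fEx' : Fin 6 → ℝ
  | 0 => 1 | 1 => 2 | 2 => 2 | 3 => 1 | 4 => 1 | 5 => 2

lemma edgeFlow1 (f : Fin 6 → ℝ) : sixCycleEdgeFlow f 1 = f 0 + f 2 + f 5 := by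
  rw [sixCycleEdgeFlow,
    show Finset.univ.filter (fun i => (1:Fin 6) ∈ sixCyclePaths i) = {0,2,5} from by decide,
    Finset.sum_insert (by decide), Finset.sum_insert (by decide), Finset.sum_singleton]
  ring

lemma edgeFlow3 (f : Fin 6 → ℝ) : sixCycleEdgeFlow f 3 = f 1 + f 2 + f 4 := by
  rw [sixCycleEdgeFlow,
    show Finset.univ.filter (fun i => (3:Fin 6) ∈ sixCyclePaths i) = {1,2,4} from by decide,
    Finset.sum_insert (by decide), Finset.sum_insert (by decide), Finset.sum_singleton]
  ring

lemma edgeFlow5 (f : Fin 6 → ℝ) : sixCycleEdgeFlow f 5 = f 1 + f 3 + f 5 := by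
  rw [sixCycleEdgeFlow,
    show Finset.univ.filter (fun i => (5:Fin 6) ∈ sixCyclePaths i) = {1,3,5} from by decide,
    Finset.sum_insert (by decide), Finset.sum_insert (by decide), Finset.sum_singleton]
  ring

theorem three_commodity_counterexample :
    ∃ f f' : Fin 6 → ℝ,
      (∀ i, 0 ≤ f i) ∧ (∀ i, 0 ≤ f' i) ∧
      f 0 + f 1 = 3 ∧ f 2 + f 3 = 3 ∧ f 4 + f 5 = 3 ∧
      f' 0 + f' 1 = 3 ∧ f' 2 + f' 3 = 3 ∧ f' 4 + f' 5 = 3 ∧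
      (∀ i, 0 < f i) ∧
      (∀ i, ∃ j ∈ sixCyclePaths i,
        sixCycleEdgeFlow f j < sixCycleEdgeFlow f' j) := by
  refine ⟨fEx, fEx', ?_, ?_, by norm_num [fEx, fEx'], by norm_num [fEx, fEx'],
    by norm_num [fEx, fEx'], by norm_num [fEx, fEx'], by norm_num [fEx, fEx'], by norm_num [fEx, fEx'], ?_, ?_⟩
  · intro i; fin_cases i <;> norm_num [fEx, fEx']
  · intro i; fin_cases i <;> norm_num [fEx, fEx']
  · intro i; fin_cases i <;> norm_num [fEx, fEx']
  · intro i
    fin_cases i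
    · exact ⟨1, by decide, by rw [edgeFlow1, edgeFlow1]; norm_num [fEx, fEx']⟩
    · exact ⟨3, by decide, by rw [edgeFlow3, edgeFlow3]; norm_num [fEx, fEx']⟩
    · exact ⟨1, by decide, by rw [edgeFlow1, edgeFlow1]; norm_num [fEx, fEx']⟩
    · exact ⟨5, by decide, by rw [edgeFlow5, edgeFlow5]; norm_num [fEx, fEx']⟩
    · exact ⟨3, by decide, by rw [edgeFlow3, edgeFlow3]; norm_num [fEx, fEx']⟩
    · exact ⟨5, by decide, by rw [edgeFlow5, edgeFlow5]; norm_num [fEx, fEx']⟩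
end
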